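/- The descent composition of a word equals the descent composition of its Hecke recording tableau: for any word h, C(h) = C(Q(h)), where the descents of the standardized recording tableau occur at entries i such that i+1 lies strictly below i. -/

import Mathlib

/-- Check of the column condition against the optional row above. -/
def aboveOK (above : Option (List ℕ)) (f : List ℕ → Bool) : Bool :=
  match above with
  | none => true
  | some p => f p

/-- One step of Hecke row insertion: insert `x` into the list of rows `rows`
(each row a strictly increasing list), where `above` is the row directly above the
first row of `rows` (`none` if the first row of `rows` is the top row).
Returns the new rows, the special corner `(row index relative to `rows`, column
index)`, and `α` (`true` iff a new box was added).  Rules (H1)–(H4) of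
Buch–Kresch–Shimozono–Tamvakis–Yong. -/
def hIns : Option (List ℕ) → List (List ℕ) → ℕ → List (List ℕ) × (ℕ × ℕ) × Bool
  | above, [], x =>
    -- past the last row: append a new row [x] if the result is increasing (H1);
    -- otherwise nothing changes and the corner is in the row above (handled by the caller)
    if aboveOK above (fun p => decide (p.headD 0 < x)) then ([[x]], (0, 0), true)
    else ([], (0, 0), false)
  | above, R :: rest, x =>
    if R.all (fun r => decide (r ≤ x)) then
      if decide (R.getLastD 0 < x) &&
          aboveOK above (fun p => decide (R.length < p.length) && decide (p.getD R.length 0 < x)) then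
        -- (H1): adjoin x to the end of the row
        ((R ++ [x]) :: rest, (0, R.length), true)
      else
        -- (H2): tableau unchanged; corner is the bottom box of the column containing
        -- the rightmost box of R
        (R :: rest,
          ((((R :: rest).filter fun S => decide (R.length - 1 < S.length)).length) - 1,
            R.length - 1),
          false)
    else
      -- y is the smallest entry of R larger than x
      let j := R.findIdx fun r => decide (x < r)
      let y := R.getD j 0
      if (decide (j = 0) || decide (R.getD (j - 1) 0 < x)) &&
          aboveOK above (fun p => decide (p.getD j 0 < x)) then
        -- (H3): replace y by x, insert y into the next row
        let R' := R.set j x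
        let out := hIns (some R') rest y
        if rest.isEmpty && !out.2.2 then (R' :: out.1, (0, 0), false)
        else (R' :: out.1, (out.2.1.1 + 1, out.2.1.2), out.2.2)
      else
        -- (H4): row unchanged, insert y into the next row
        let out := hIns (some R) rest y
        if rest.isEmpty && !out.2.2 then (R :: out.1, (0, 0), false)
        else (R :: out.1, (out.2.1.1 + 1, out.2.1.2), out.2.2)

/-- The Hecke insertion tableau `P(h)` of a word `h`, as a list of rows. -/
def heckeP (h : List ℕ) : List (List ℕ) := h.foldl (fun T x => (hIns none T x).1) []

/-- The sequence of special corners produced while Hecke-inserting the word `h`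
letter by letter; labelling corner `k` (0-indexed: `k`-th step) with `k+1` produces
the set-valued recording tableau `Q(h)`. -/
def heckeCorners (h : List ℕ) : List (ℕ × ℕ) :=
  (h.foldl (fun (acc : List (List ℕ) × List (ℕ × ℕ)) x =>
    let out := hIns none acc.1 x
    (out.1, acc.2 ++ [out.2.1])) ([], [])).2

/-- The composition of maximal runs of a list of numbers, where a new run starts
whenever `brk` holds between consecutive entries. -/
def runComp (brk : ℕ → ℕ → Bool) : List ℕ → List ℕ
  | [] => []
  | [_] => [1]
  | a :: b :: t =>
    if brk a b then 1 :: runComp brk (b :: t)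
    else
      match runComp brk (b :: t) with
      | [] => [1]
      | c :: cs => (c + 1) :: cs

namespace HP

/-- value exceeds head of optional row above -/
def okAb : Option (List ℕ) → ℕ → Prop
  | none, _ => True
  | some A, x => A ≠ [] ∧ A.headD 0 < x

/-- `A` dominates `R` columnwise (strict) and is at least as long. -/
def Dom (A R : List ℕ) : Prop :=
  R.length ≤ A.length ∧ ∀ k, k < R.length → A.getD k 0 < R.getD k 0

def AbDom : Option (List ℕ) → List ℕ → Prop
  | none, _ => True
  | some A, R => Dom A R

def Incr (R : List ℕ) : Prop := ∀ i j, i < j → j < R.length → R.getD i 0 < R.getD j 0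

def PosL (R : List ℕ) : Prop := ∀ i, i < R.length → 0 < R.getD i 0

def Valid : Option (List ℕ) → List (List ℕ) → Prop
  | _, [] => True
  | o, R :: rest => R ≠ [] ∧ Incr R ∧ PosL R ∧ AbDom o R ∧ Valid (some R) rest

lemma getD_set_self {l : List ℕ} {i v : ℕ} (h : i < l.length) : (l.set i v).getD i 0 = v := by
  rw [List.getD_eq_getElem _ _ (by simpa using h), List.getElem_set_self]

lemma getD_set_ne {l : List ℕ} {i v k : ℕ} (h : i ≠ k) : (l.set i v).getD k 0 = l.getD k 0 := by
  by_cases hk : k < l.length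
  · rw [List.getD_eq_getElem _ _ (by simpa using hk), List.getD_eq_getElem _ _ hk,
      List.getElem_set_ne h]
  · rw [List.getD_eq_default _ _ (by simpa using not_lt.1 hk),
      List.getD_eq_default _ _ (by simpa using not_lt.1 hk)]

lemma headD_eq {l : List ℕ} : l.headD 0 = l.getD 0 0 := by cases l <;> simp

lemma getLastD_eq {l : List ℕ} (h : l ≠ []) : l.getLastD 0 = l.getD (l.length - 1) 0 := by
  cases l with
  | nil => simp_all
  | cons a t =>
    rw [List.getLastD_eq_getLast?, List.getLast?_eq_getElem?]
    simp [List.getD_eq_getElem?_getD]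

lemma all_le_iff {R : List ℕ} {x : ℕ} :
    (R.all fun r => decide (r ≤ x)) = true ↔ ∀ k, k < R.length → R.getD k 0 ≤ x := by
  rw [List.all_eq_true]
  constructor
  · intro h k hk
    rw [List.getD_eq_getElem _ _ hk]
    simpa using h _ (List.getElem_mem hk)
  · intro h r hr
    obtain ⟨k, hk, rfl⟩ := List.mem_iff_getElem.1 hr
    simpa using (List.getD_eq_getElem R 0 hk) ▸ h k hk

/-- insertion into no rows, with the head condition, makes a new row -/
lemma hIns_nil {o : Option (List ℕ)} {x : ℕ} (ho : okAb o x) :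
    hIns o [] x = ([[x]], (0, 0), true) := by
  cases o with
  | none => simp [hIns, aboveOK]
  | some A =>
    have ho' : A.headD 0 < x := ho.2
    simp only [hIns, aboveOK]
    exact if_pos (decide_eq_true ho')


lemma valid_above_mono {A A' : List ℕ} {rows : List (List ℕ)}
    (hv : Valid (some A) rows) (hle : ∀ k, A'.getD k 0 ≤ A.getD k 0)
    (hlen : A.length ≤ A'.length) : Valid (some A') rows := by
  cases rows with
  | nil => trivial
  | cons R rest =>
    obtain ⟨h1, h2, h3, h4, h5⟩ := hv
    exact ⟨h1, h2, h3, ⟨le_trans h4.1 hlen,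
      fun k hk => lt_of_le_of_lt (hle k) (h4.2 k hk)⟩, h5⟩

lemma le_findIdx_of {R : List ℕ} {x m : ℕ} (hm : m ≤ R.length)
    (h : ∀ k, k < m → R.getD k 0 ≤ x) : m ≤ R.findIdx fun r => decide (x < r) := by
  by_contra hc
  push_neg at hc
  have hlt : (R.findIdx fun r => decide (x < r)) < R.length := lt_of_lt_of_le hc hm
  have h2 := List.findIdx_getElem (p := fun r => decide (x < r)) (w := hlt)
  rw [← List.getD_eq_getElem R 0 hlt] at h2
  simp only [decide_eq_true_eq] at h2
  exact absurd (h _ hc) (not_le.2 h2)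

lemma findIdx_le_of {R : List ℕ} {x m : ℕ} (hm : m < R.length)
    (h : x < R.getD m 0) : (R.findIdx fun r => decide (x < r)) ≤ m := by
  by_contra hc
  push_neg at hc
  have h2 := List.not_of_lt_findIdx (p := fun r => decide (x < r)) (xs := R) (i := m) hc
  rw [show R[m] = R.getD m 0 from (List.getD_eq_getElem R 0 hm).symm] at h2
  simp only [decide_eq_false_iff_not, decide_eq_true_eq] at h2
  exact absurd h h2

/-- Everything we know after a bumping (H3/H4) step. -/
def Bump (o : Option (List ℕ)) (R : List ℕ) (rest : List (List ℕ)) (x : ℕ) : Prop :=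
  ∃ j R1, j < R.length ∧ x < R.getD j 0 ∧ (∀ k, k < j → R.getD k 0 ≤ x) ∧
  R1.length = R.length ∧ (∀ k, R1.getD k 0 ≤ R.getD k 0) ∧
  Incr R1 ∧ PosL R1 ∧ R1 ≠ [] ∧
  okAb (some R1) (R.getD j 0) ∧ Valid (some R1) rest ∧
  ((R1 = R.set j x ∧ (∀ A, o = some A → A.getD j 0 < x)) ∨
    (R1 = R ∧ 0 < j ∧ (x ≤ R.getD (j - 1) 0 ∨ ∃ A, o = some A ∧ j < A.length ∧ x ≤ A.getD j 0))) ∧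
  hIns o (R :: rest) x =
    (R1 :: (hIns (some R1) rest (R.getD j 0)).1,
      ((hIns (some R1) rest (R.getD j 0)).2.1.1 + 1, (hIns (some R1) rest (R.getD j 0)).2.1.2),
      (hIns (some R1) rest (R.getD j 0)).2.2)

lemma bump_spec {o : Option (List ℕ)} {R : List ℕ} {rest : List (List ℕ)} {x : ℕ}
    (hne : R ≠ []) (hincr : Incr R) (hpos : PosL R) (hvrest : Valid (some R) rest)
    (ho : okAb o x) (hx : 0 < x)
    (hna : ¬ ((R.all fun r => decide (r ≤ x)) = true)) : Bump o R rest x := by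
  set j := R.findIdx fun r => decide (x < r) with hjdef
  have hex : ∃ r ∈ R, (decide (x < r)) = true := by
    by_contra hc
    push_neg at hc
    apply hna
    rw [all_le_iff]
    intro k hk
    have := hc _ (List.getD_eq_getElem R 0 hk ▸ List.getElem_mem hk)
    simpa using this
  have hjlen : j < R.length := List.findIdx_lt_length_of_exists hex
  have hxj : x < R.getD j 0 := by
    have := List.findIdx_getElem (p := fun r => decide (x < r)) (w := hjlen)
    rw [← List.getD_eq_getElem R 0 hjlen] at this
    simpa using this
  have hbelow : ∀ k, k < j → R.getD k 0 ≤ x := by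
    intro k hk
    have h2 := List.not_of_lt_findIdx (p := fun r => decide (x < r)) (xs := R) (i := k) hk
    rw [show R[k] = R.getD k 0 from (List.getD_eq_getElem R 0 (lt_trans hk hjlen)).symm] at h2
    simp only [decide_eq_false_iff_not, not_lt] at h2
    exact h2
  set y := R.getD j 0 with hydef
  have hxy : x < y := hxj
  -- the H3 condition
  by_cases hcond : ((decide (j = 0) || decide (R.getD (j - 1) 0 < x)) &&
      aboveOK o (fun p => decide (p.getD j 0 < x))) = true
  · -- H3 case
    set R1 := R.set j x with hR1
    have hlen : R1.length = R.length := List.length_set ..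
    have hprev : j = 0 ∨ R.getD (j - 1) 0 < x := by
      rcases Bool.and_eq_true_iff.1 hcond with ⟨h1, _⟩
      rcases Bool.or_eq_true_iff.1 h1 with h | h
      · exact Or.inl (by simpa using h)
      · exact Or.inr (by simpa using h)
    have hlt_of_lt_j : ∀ k, k < j → R.getD k 0 < x := by
      intro k hk
      rcases hprev with h0 | h0
      · omega
      · rcases eq_or_lt_of_le (Nat.le_sub_one_of_lt hk) with he | hlt
        · exact he ▸ h0
        · exact lt_trans (hincr k (j-1) hlt (by omega)) h0
    have hle : ∀ k, R1.getD k 0 ≤ R.getD k 0 := by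
      intro k
      rcases eq_or_ne j k with rfl | hne'
      · rw [getD_set_self hjlen]; exact le_of_lt hxj
      · rw [getD_set_ne hne']
    have hincr1 : Incr R1 := by
      intro i i' hii hi'
      rw [hlen] at hi'
      rcases eq_or_ne j i with rfl | hji
      · rw [getD_set_self hjlen, getD_set_ne (by omega)]
        exact lt_of_lt_of_le hxj (le_of_lt (hincr j i' hii hi'))
      · rcases eq_or_ne j i' with rfl | hji'
        · rw [getD_set_self hjlen, getD_set_ne hji]
          exact hlt_of_lt_j i hii
        · rw [getD_set_ne hji, getD_set_ne hji']
          exact hincr i i' hii hi'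
    have hpos1 : PosL R1 := by
      intro i hi
      rw [hlen] at hi
      rcases eq_or_ne j i with rfl | hji
      · rw [getD_set_self hjlen]; exact hx
      · rw [getD_set_ne hji]; exact hpos i hi
    have hne1 : R1 ≠ [] := by
      rw [← List.length_pos_iff, hlen]
      exact List.length_pos_iff.2 hne
    have hok1 : okAb (some R1) y := by
      refine ⟨hne1, ?_⟩
      rw [headD_eq]
      rcases Nat.eq_zero_or_pos j with hj0 | hj
      · rw [hR1, hj0, getD_set_self (hj0 ▸ hjlen)]
        exact hxy
      · rw [hR1, getD_set_ne (by omega)]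
        exact hincr 0 j hj hjlen
    have habove : ∀ A, o = some A → A.getD j 0 < x := by
      intro A hA
      subst hA
      rcases Bool.and_eq_true_iff.1 hcond with ⟨_, h2⟩
      simpa [aboveOK] using h2
    have hvrest1 : Valid (some R1) rest := valid_above_mono hvrest hle (le_of_eq hlen.symm)
    have heq : hIns o (R :: rest) x =
        (R1 :: (hIns (some R1) rest y).1,
          ((hIns (some R1) rest y).2.1.1 + 1, (hIns (some R1) rest y).2.1.2),
          (hIns (some R1) rest y).2.2) := by
      rw [hIns]
      rw [if_neg hna]
      dsimp only
      rw [← hjdef, ← hydef, if_pos hcond, ← hR1]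
      cases rest with
      | nil =>
        rw [hIns_nil hok1]
        simp
      | cons S srest => simp
    exact ⟨j, R1, hjlen, hxj, hbelow, hlen, hle, hincr1, hpos1, hne1,
      hok1, hvrest1, Or.inl ⟨hR1, habove⟩, heq⟩
  · -- H4 case
    have hok1 : okAb (some R) y := by
      refine ⟨hne, ?_⟩
      rw [headD_eq]
      rcases Nat.eq_zero_or_pos j with hj0 | hj
      · exfalso
        apply hcond
        rw [Bool.and_eq_true_iff]
        constructor
        · rw [Bool.or_eq_true_iff]; exact Or.inl (by simpa using hj0)
        · cases o with
          | none => rfl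
          | some A =>
            have : A.getD j 0 < x := by
              rw [hj0, ← headD_eq]; exact ho.2
            simpa [aboveOK] using this
      · exact hincr 0 j hj hjlen
    have hj : 0 < j := by
      by_contra hc
      push_neg at hc
      interval_cases j
      · -- j = 0: shown above hcond must hold
        apply hcond
        rw [Bool.and_eq_true_iff]
        refine ⟨Bool.or_eq_true_iff.2 (Or.inl (by simp)), ?_⟩
        cases o with
        | none => rfl
        | some A =>
          have : A.getD 0 0 < x := by rw [← headD_eq]; exact ho.2
          simpa [aboveOK] using this
    have hreason : x ≤ R.getD (j - 1) 0 ∨ ∃ A, o = some A ∧ j < A.length ∧ x ≤ A.getD j 0 := by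
      by_cases h1 : R.getD (j - 1) 0 < x
      · right
        have h2 : aboveOK o (fun p => decide (p.getD j 0 < x)) ≠ true := by
          intro hc
          exact hcond (Bool.and_eq_true_iff.2 ⟨Bool.or_eq_true_iff.2 (Or.inr (by simpa using h1)), hc⟩)
        cases o with
        | none => exact absurd rfl h2
        | some A =>
          have hA : x ≤ A.getD j 0 := by
            by_contra hc
            exact h2 (by simpa [aboveOK] using not_le.1 hc)
          refine ⟨A, rfl, ?_, hA⟩
          by_contra hc
          rw [List.getD_eq_default _ _ (by omega)] at hA
          omega
      · exact Or.inl (not_lt.1 h1)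
    have heq : hIns o (R :: rest) x =
        (R :: (hIns (some R) rest y).1,
          ((hIns (some R) rest y).2.1.1 + 1, (hIns (some R) rest y).2.1.2),
          (hIns (some R) rest y).2.2) := by
      rw [hIns]
      rw [if_neg hna]
      dsimp only
      rw [← hjdef, ← hydef, if_neg hcond]
      cases rest with
      | nil =>
        rw [hIns_nil hok1]
        simp
      | cons S srest => simp
    exact ⟨j, R, hjlen, hxj, hbelow, rfl, fun k => le_refl _, hincr, hpos, hne,
      hok1, hvrest, Or.inr ⟨rfl, hj, hreason⟩, heq⟩


lemma valid_above_append {A : List ℕ} {v : ℕ} {rows : List (List ℕ)}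
    (hv : Valid (some A) rows) : Valid (some (A ++ [v])) rows := by
  cases rows with
  | nil => trivial
  | cons S rest =>
    obtain ⟨h1, h2, h3, h4, h5⟩ := hv
    refine ⟨h1, h2, h3, ⟨?_, fun k hk => ?_⟩, h5⟩
    · rw [List.length_append]; exact le_trans h4.1 (by simp)
    · rw [List.getD_append _ _ _ _ (lt_of_lt_of_le hk h4.1)]
      exact h4.2 k hk

/-- Validity is preserved by Hecke insertion. -/
lemma valid_hIns (rows : List (List ℕ)) : ∀ (o : Option (List ℕ)) (x : ℕ),
    Valid o rows → okAb o x → 0 < x → Valid o (hIns o rows x).1 := by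
  induction rows with
  | nil =>
    intro o x hv ho hx
    rw [hIns_nil ho]
    refine ⟨by simp, ?_, ?_, ?_, trivial⟩
    · intro i j hij hj; simp at hj; omega
    · intro i hi; simp at hi; subst hi; simpa using hx
    · cases o with
      | none => trivial
      | some A =>
        refine ⟨by simpa using Nat.succ_le_of_lt (List.length_pos_iff.2 ho.1), fun k hk => ?_⟩
        simp only [List.length_singleton] at hk
        interval_cases k
        rw [← headD_eq]
        simpa using ho.2
  | cons R rest ih =>
    intro o x hv ho hx
    by_cases hall : (R.all fun r => decide (r ≤ x)) = true
    · obtain ⟨hne, hincr, hpos, habdom, hvrest⟩ := hv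
      rw [hIns, if_pos hall]
      by_cases hcond : (decide (R.getLastD 0 < x) &&
          aboveOK o fun p => decide (R.length < p.length) && decide (p.getD R.length 0 < x)) = true
      · rw [if_pos hcond]
        rcases Bool.and_eq_true_iff.1 hcond with ⟨hlast, habv⟩
        have hlast' : R.getD (R.length - 1) 0 < x := by
          rw [← getLastD_eq hne]; simpa using hlast
        have hRlen : 0 < R.length := List.length_pos_iff.2 hne
        refine ⟨by simp, ?_, ?_, ?_, valid_above_append hvrest⟩
        · -- Incr (R ++ [x])
          intro i i' hii hi'
          simp only [List.length_append, List.length_singleton] at hi'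
          rcases lt_or_ge i' R.length with h' | h'
          · rw [List.getD_append _ _ _ _ (lt_trans hii h'), List.getD_append _ _ _ _ h']
            exact hincr i i' hii h'
          · have hi'e : i' = R.length := by omega
            subst hi'e
            rw [List.getD_append _ _ _ _ (by omega)]
            have : (R ++ [x]).getD R.length 0 = x := by
              rw [List.getD_eq_getElem _ _ (by simp)]
              simp
            rw [this]
            rcases eq_or_lt_of_le (Nat.le_sub_one_of_lt hii) with he | hlt
            · exact he ▸ hlast'
            · exact lt_trans (hincr i (R.length - 1) hlt (by omega)) hlast'
        · intro i hi
          simp only [List.length_append, List.length_singleton] at hi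
          rcases lt_or_ge i R.length with h' | h'
          · rw [List.getD_append _ _ _ _ h']; exact hpos i h'
          · have : i = R.length := by omega
            subst this
            have : (R ++ [x]).getD R.length 0 = x := by
              rw [List.getD_eq_getElem _ _ (by simp)]
              simp
            rw [this]; exact hx
        · cases o with
          | none => trivial
          | some A =>
            simp only [aboveOK, Bool.and_eq_true, decide_eq_true_eq] at habv
            refine ⟨by simp; omega, fun k hk => ?_⟩
            simp only [List.length_append, List.length_singleton] at hk
            rcases lt_or_ge k R.length with h' | h'
            · rw [List.getD_append _ _ _ _ h']; exact habdom.2 k h'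
            · have : k = R.length := by omega
              subst this
              have : (R ++ [x]).getD R.length 0 = x := by
                rw [List.getD_eq_getElem _ _ (by simp)]
                simp
              rw [this]; exact habv.2
      · rw [if_neg hcond]
        exact ⟨hne, hincr, hpos, habdom, hvrest⟩
    · obtain ⟨hne, hincr, hpos, habdom, hvrest⟩ := hv
      obtain ⟨j, R1, hjlen, hxj, hbelow, hlen, hle, hincr1, hpos1, hne1,
        hok1, hvrest1, hcase, heq⟩ := bump_spec hne hincr hpos hvrest ho hx hall
      rw [heq]
      have habdom1 : AbDom o R1 := by
        rcases hcase with ⟨hR1, habove⟩ | ⟨hR1, _, _⟩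
        · cases o with
          | none => trivial
          | some A =>
            refine ⟨hlen ▸ habdom.1, fun k hk => ?_⟩
            rw [hlen] at hk
            rcases eq_or_ne j k with rfl | hjk
            · rw [hR1, getD_set_self hjlen]; exact habove A rfl
            · rw [hR1, getD_set_ne hjk]; exact habdom.2 k hk
        · rw [hR1]; exact habdom
      exact ⟨hne1, hincr1, hpos1, habdom1,
        ih (some R1) (R.getD j 0) hvrest1 hok1 (lt_trans hx hxj)⟩


lemma valid_len_le {A : List ℕ} : ∀ {rows : List (List ℕ)}, Valid (some A) rows →
    ∀ i, ((rows.getD i []).length ≤ A.length) := by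
  intro rows
  induction rows generalizing A with
  | nil => intro _ i; simp [List.getD]
  | cons S rest ih =>
    intro hv i
    obtain ⟨h1, h2, h3, h4, h5⟩ := hv
    cases i with
    | zero => exact h4.1
    | succ n =>
      have := ih h5 n
      calc ((S :: rest).getD (n+1) []).length = ((rest.getD n [])).length := by simp [List.getD]
        _ ≤ S.length := ih h5 n
        _ ≤ A.length := h4.1

lemma valid_anti : ∀ {rows : List (List ℕ)} {o}, Valid o rows →
    ∀ i i', i ≤ i' → (rows.getD i' []).length ≤ (rows.getD i []).length := by
  intro rows
  induction rows with
  | nil => intro o _ i i' _; simp [List.getD]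
  | cons S rest ih =>
    intro o hv i i' hii
    obtain ⟨h1, h2, h3, h4, h5⟩ := hv
    cases i with
    | zero =>
      cases i' with
      | zero => rfl
      | succ n =>
        calc ((S :: rest).getD (n+1) []).length = ((rest.getD n [])).length := by simp [List.getD]
          _ ≤ S.length := valid_len_le h5 n
          _ = ((S :: rest).getD 0 []).length := by simp [List.getD]
    | succ n =>
      cases i' with
      | zero => omega
      | succ n' =>
        have := ih h5 n n' (by omega)
        simpa [List.getD] using this

lemma filter_count_le {P : List ℕ → Bool} : ∀ {rows : List (List ℕ)} {k : ℕ},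
    (∀ i, k ≤ i → i < rows.length → P (rows.getD i []) = false) →
    (rows.filter P).length ≤ k := by
  intro rows
  induction rows with
  | nil => intro k _; simp
  | cons S rest ih =>
    intro k h
    cases k with
    | zero =>
      have : (S :: rest).filter P = [] := by
        apply List.filter_eq_nil_iff.2
        intro a ha
        obtain ⟨i, hi, rfl⟩ := List.mem_iff_getElem.1 ha
        rw [← List.getD_eq_getElem _ [] hi]
        simp only [Bool.not_eq_true]
        exact h i (by omega) hi
      simp [this]
    | succ k' =>
      rw [List.filter_cons]
      have hrest : (rest.filter P).length ≤ k' := ih (fun i hi hlen => by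
        have := h (i+1) (by omega) (by simpa using Nat.add_lt_add_right hlen 1)
        simpa [List.getD] using this)
      split
      · simp only [List.length_cons]
        omega
      · omega

lemma anti_filter_bound {m : ℕ} : ∀ {rows : List (List ℕ)},
    (∀ i i', i ≤ i' → (rows.getD i' []).length ≤ (rows.getD i []).length) →
    ∀ i, (rows.filter fun S => decide (m < S.length)).length ≤ i →
    (rows.getD i []).length ≤ m := by
  intro rows
  induction rows with
  | nil => intro _ i _; simp [List.getD]
  | cons S rest ih =>
    intro hanti i hi
    by_cases hS : m < S.length
    · rw [List.filter_cons_of_pos (by simpa using hS)] at hi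
      simp only [List.length_cons] at hi
      cases i with
      | zero => omega
      | succ n =>
        have hanti' : ∀ a a', a ≤ a' → (rest.getD a' []).length ≤ (rest.getD a []).length := by
          intro a a' haa
          have := hanti (a+1) (a'+1) (by omega)
          simpa [List.getD] using this
        have := ih hanti' n (by omega)
        simpa [List.getD] using this
    · have := hanti 0 i (by omega)
      simp only [List.getD_cons_zero] at this
      omega

/-- L1: rows strictly below the special corner are at most `c` long, and `c` is less
than the length of the row above. -/
lemma corner_depth (rows : List (List ℕ)) : ∀ (o : Option (List ℕ)) (x : ℕ),
    Valid o rows → okAb o x → 0 < x →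
    (∀ i, (hIns o rows x).2.1.1 < i → ((hIns o rows x).1.getD i []).length ≤ (hIns o rows x).2.1.2)
    ∧ (∀ A, o = some A → (hIns o rows x).2.1.2 < A.length) := by
  induction rows with
  | nil =>
    intro o x hv ho hx
    rw [hIns_nil ho]
    constructor
    · intro i hi
      simp only at hi ⊢
      rw [List.getD_eq_default _ _ (by simp; omega)]
      simp
    · intro A hA
      subst hA
      simpa using List.length_pos_iff.2 ho.1
  | cons R rest ih =>
    intro o x hv ho hx
    obtain ⟨hne, hincr, hpos, habdom, hvrest⟩ := hv
    by_cases hall : (R.all fun r => decide (r ≤ x)) = true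
    · rw [hIns, if_pos hall]
      by_cases hcond : (decide (R.getLastD 0 < x) &&
          aboveOK o fun p => decide (R.length < p.length) && decide (p.getD R.length 0 < x)) = true
      · rw [if_pos hcond]
        constructor
        · intro i hi
          simp only at hi ⊢
          cases i with
          | zero => omega
          | succ n =>
            have : ((((R ++ [x]) :: rest).getD (n+1) []) : List ℕ) = rest.getD n [] := by
              simp [List.getD]
            rw [this]
            exact valid_len_le hvrest n
        · intro A hA
          subst hA
          rcases Bool.and_eq_true_iff.1 hcond with ⟨_, habv⟩
          simp only [aboveOK, Bool.and_eq_true, decide_eq_true_eq] at habv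
          exact habv.1
      · rw [if_neg hcond]
        have hv' : Valid o (R :: rest) := ⟨hne, hincr, hpos, habdom, hvrest⟩
        have hRlen : 0 < R.length := List.length_pos_iff.2 hne
        constructor
        · intro i hi
          show ((R :: rest).getD i []).length ≤ R.length - 1
          apply anti_filter_bound (valid_anti hv')
          have ht : 0 < ((R :: rest).filter fun S => decide (R.length - 1 < S.length)).length := by
            rw [List.filter_cons_of_pos (by simp; omega)]
            simp
          have hi' : ((R :: rest).filter fun S => decide (R.length - 1 < S.length)).length - 1 < i := hi
          omega
        · intro A hA
          subst hA
          have h1 := habdom.1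
          show R.length - 1 < A.length
          omega
    · obtain ⟨j, R1, hjlen, hxj, hbelow, hlen, hle, hincr1, hpos1, hne1,
        hok1, hvrest1, hcase, heq⟩ := bump_spec hne hincr hpos hvrest ho hx hall
      rw [heq]
      obtain ⟨iha, ihb⟩ := ih (some R1) (R.getD j 0) hvrest1 hok1 (lt_trans hx hxj)
      constructor
      · intro i hi
        simp only at hi ⊢
        cases i with
        | zero => omega
        | succ n =>
          have : (((R1 :: (hIns (some R1) rest (R.getD j 0)).1).getD (n+1) []) : List ℕ)
              = (hIns (some R1) rest (R.getD j 0)).1.getD n [] := by simp [List.getD]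
          rw [this]
          exact iha n (by omega)
      · intro A hA
        subst hA
        have h1 : (hIns (some R1) rest (R.getD j 0)).2.1.2 < R1.length := ihb R1 rfl
        have h2 : R.length ≤ A.length := habdom.1
        simp only []
        omega

/-- L2: if the insertion bumps in the first row `R`, the special corner lies strictly
below every row of length ≥ `R.length`. -/
lemma corner_low : ∀ (rows : List (List ℕ)) (o : Option (List ℕ)) (x : ℕ),
    Valid o rows → okAb o x → 0 < x →
    ∀ (hne : rows ≠ []),
    ¬ (((rows.headD []).all fun r => decide (r ≤ x)) = true) →
    ((rows.filter fun S => decide ((rows.headD []).length - 1 < S.length)).length ≤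
      (hIns o rows x).2.1.1) := by
  intro rows
  induction rows with
  | nil => intro o x _ _ _ hne; simp at hne
  | cons R rest ih =>
    intro o x hv ho hx _ hna
    simp only [List.headD_cons] at hna
    show (List.filter (fun S => decide (R.length - 1 < S.length)) (R :: rest)).length ≤
      (hIns o (R :: rest) x).2.1.1
    obtain ⟨hne, hincr, hpos, habdom, hvrest⟩ := hv
    obtain ⟨j, R1, hjlen, hxj, hbelow, hlen, hle, hincr1, hpos1, hne1,
      hok1, hvrest1, hcase, heqq⟩ := bump_spec hne hincr hpos hvrest ho hx hna
    rw [heqq]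
    show _ ≤ (hIns (some R1) rest (R.getD j 0)).2.1.1 + 1
    have hRlen : 0 < R.length := List.length_pos_iff.2 hne
    rw [List.filter_cons_of_pos (by simp; omega)]
    simp only [List.length_cons]
    rw [Nat.add_le_add_iff_right]
    cases rest with
    | nil => simp
    | cons S srest =>
      by_cases hS : R.length ≤ S.length
      · -- S has the same length as R; recursion bumps again
        have hSR1 : S.length ≤ R1.length := (hvrest1.2.2.2.1).1
        have hSlen : S.length = R.length := by omega
        have hDomRS : Dom R S := hvrest.2.2.2.1
        have hna2 : ¬ ((S.all fun r => decide (r ≤ R.getD j 0)) = true) := by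
          rw [all_le_iff]
          push_neg
          exact ⟨j, by omega, hDomRS.2 j (by omega)⟩
        have hrec := ih (some R1) (R.getD j 0) hvrest1 hok1 (lt_trans hx hxj)
          (by simp) (by simpa using hna2)
        simp only [List.headD_cons] at hrec
        have hpred : (List.filter (fun S' => decide (R.length - 1 < S'.length)) (S :: srest)).length
            = (List.filter (fun S' => decide (S.length - 1 < S'.length)) (S :: srest)).length := by
          rw [hSlen]
        rw [hpred]
        exact hrec
      · -- all the remaining rows are shorter than R
        have hzero : (((S :: srest).filter fun S' => decide (R.length - 1 < S'.length)).length) = 0 := by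
          have h0 : ∀ i, 0 ≤ i → i < (S :: srest).length →
              (fun S' => decide (R.length - 1 < S'.length)) (((S :: srest)).getD i []) = false := by
            intro i _ hi
            have hanti := valid_anti hvrest1 0 i (by omega)
            simp only [List.getD_cons_zero] at hanti
            simp only [decide_eq_false_iff_not, not_lt]
            omega
          have := filter_count_le (P := fun S' => decide (R.length - 1 < S'.length))
            (rows := S :: srest) (k := 0) h0
          omega
        omega


lemma getD_append_last {R : List ℕ} {x : ℕ} : (R ++ [x]).getD R.length 0 = x := by
  rw [List.getD_eq_getElem _ _ (by simp)]
  simp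

/-- If `a ≤ b` then inserting `a` and then `b`, the second special corner is weakly
above the first. -/
lemma compare_le : ∀ (rows : List (List ℕ)) (o1 o2 : Option (List ℕ)) (a b : ℕ),
    Valid o1 rows → okAb o1 a → okAb o2 b → 0 < a → a ≤ b →
    (hIns o2 (hIns o1 rows a).1 b).2.1.1 ≤ (hIns o1 rows a).2.1.1 := by
  intro rows
  induction rows with
  | nil =>
    intro o1 o2 a b hv ho1 ho2 ha hab
    rw [hIns_nil ho1]
    have hall2 : ([a].all fun r => decide (r ≤ b)) = true := by simp [hab]
    show (hIns o2 [[a]] b).2.1.1 ≤ 0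
    rw [hIns, if_pos hall2]
    by_cases hcond2 : (decide ([a].getLastD 0 < b) && aboveOK o2 fun p =>
        decide ([a].length < p.length) && decide (p.getD [a].length 0 < b)) = true
    · rw [if_pos hcond2]
    · rw [if_neg hcond2]
      show (List.filter (fun S => decide ([a].length - 1 < S.length)) [[a]]).length - 1 ≤ 0
      simp
  | cons R rest ih =>
    intro o1 o2 a b hv ho1 ho2 ha hab
    obtain ⟨hne, hincr, hpos, habdom, hvrest⟩ := hv
    have hRlen : 0 < R.length := List.length_pos_iff.2 hne
    by_cases hall1 : (R.all fun r => decide (r ≤ a)) = true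
    · by_cases hcond1 : (decide (R.getLastD 0 < a) && aboveOK o1 fun p =>
          decide (R.length < p.length) && decide (p.getD R.length 0 < a)) = true
      · -- (H1) for the first insertion
        have e1 : hIns o1 (R :: rest) a = ((R ++ [a]) :: rest, (0, R.length), true) := by
          rw [hIns, if_pos hall1, if_pos hcond1]
        rw [e1]
        show (hIns o2 ((R ++ [a]) :: rest) b).2.1.1 ≤ 0
        have hall2 : ((R ++ [a]).all fun r => decide (r ≤ b)) = true := by
          rw [all_le_iff]
          intro k hk
          rw [List.length_append, List.length_singleton] at hk
          rcases lt_or_ge k R.length with h | h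
          · rw [List.getD_append _ _ _ _ h]
            exact le_trans (all_le_iff.1 hall1 k h) hab
          · have hkk : k = R.length := by omega
            subst hkk
            rw [getD_append_last]
            exact hab
        rw [hIns, if_pos hall2]
        by_cases hcond2 : (decide ((R ++ [a]).getLastD 0 < b) && aboveOK o2 fun p =>
            decide ((R ++ [a]).length < p.length) && decide (p.getD (R ++ [a]).length 0 < b)) = true
        · rw [if_pos hcond2]
        · rw [if_neg hcond2]
          show (List.filter (fun S => decide ((R ++ [a]).length - 1 < S.length))
            ((R ++ [a]) :: rest)).length - 1 ≤ 0
          rw [List.filter_cons_of_pos (by simp)]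
          have h0 := filter_count_le (P := fun S => decide ((R ++ [a]).length - 1 < S.length))
            (rows := rest) (k := 0)
            (fun i _ _ => by
              have := valid_len_le hvrest i
              simp only [decide_eq_false_iff_not, not_lt, List.length_append,
                List.length_singleton]
              omega)
          simp only [List.length_cons]
          omega
      · -- (H2) for the first insertion
        have e1 : hIns o1 (R :: rest) a = (R :: rest,
            ((((R :: rest).filter fun S => decide (R.length - 1 < S.length)).length) - 1,
              R.length - 1), false) := by
          rw [hIns, if_pos hall1, if_neg hcond1]
        rw [e1]
        show (hIns o2 (R :: rest) b).2.1.1 ≤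
          (((R :: rest).filter fun S => decide (R.length - 1 < S.length)).length) - 1
        have hall2 : (R.all fun r => decide (r ≤ b)) = true := by
          rw [all_le_iff]
          intro k hk
          exact le_trans (all_le_iff.1 hall1 k hk) hab
        rw [hIns, if_pos hall2]
        by_cases hcond2 : (decide (R.getLastD 0 < b) && aboveOK o2 fun p =>
            decide (R.length < p.length) && decide (p.getD R.length 0 < b)) = true
        · rw [if_pos hcond2]
          exact Nat.zero_le _
        · rw [if_neg hcond2]
    · -- the first insertion bumps
      obtain ⟨j1, R1, hjlen1, hxj1, hbelow1, hlen1, hle1, hincr1, hpos1, hne1,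
        hok1, hvrest1, hcase1, heq1⟩ := bump_spec hne hincr hpos hvrest ho1 ha hall1
      rw [heq1]
      show (hIns o2 (R1 :: (hIns (some R1) rest (R.getD j1 0)).1) b).2.1.1 ≤
        (hIns (some R1) rest (R.getD j1 0)).2.1.1 + 1
      have hy1pos : 0 < R.getD j1 0 := lt_trans ha hxj1
      have hRlen1 : 0 < R1.length := List.length_pos_iff.2 hne1
      by_cases hall2 : (R1.all fun r => decide (r ≤ b)) = true
      · rw [hIns, if_pos hall2]
        by_cases hcond2 : (decide (R1.getLastD 0 < b) && aboveOK o2 fun p =>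
            decide (R1.length < p.length) &&
              decide (p.getD R1.length 0 < b)) = true
        · rw [if_pos hcond2]
          exact Nat.zero_le _
        · rw [if_neg hcond2]
          obtain ⟨hda, hdb⟩ := corner_depth rest (some R1) (R.getD j1 0) hvrest1 hok1 hy1pos
          have hc := hdb R1 rfl
          show (List.filter (fun S => decide (R1.length - 1 < S.length))
            (R1 :: (hIns (some R1) rest (R.getD j1 0)).1)).length - 1 ≤
            (hIns (some R1) rest (R.getD j1 0)).2.1.1 + 1
          rw [List.filter_cons_of_pos (by simp; omega)]
          have hcount := filter_count_le (P := fun S => decide (R1.length - 1 < S.length))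
            (rows := (hIns (some R1) rest (R.getD j1 0)).1)
            (k := (hIns (some R1) rest (R.getD j1 0)).2.1.1 + 1)
            (fun i hi _ => by
              have := hda i (by omega)
              simp only [decide_eq_false_iff_not, not_lt]
              omega)
          simp only [List.length_cons]
          omega
      · -- the second insertion bumps as well
        have hvrest1' : Valid (some R1) (hIns (some R1) rest (R.getD j1 0)).1 :=
          valid_hIns rest (some R1) (R.getD j1 0) hvrest1 hok1 hy1pos
        obtain ⟨j2, R2, hjlen2, hxj2, hbelow2, hlen2, hle2, hincr2, hpos2, hne2,
          hok2, hvrest2, hcase2, heq2⟩ :=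
          bump_spec hne1 hincr1 hpos1 hvrest1' ho2 (lt_of_lt_of_le ha hab) hall2
        rw [heq2]
        show (hIns (some R2) (hIns (some R1) rest (R.getD j1 0)).1 (R1.getD j2 0)).2.1.1 + 1 ≤
          (hIns (some R1) rest (R.getD j1 0)).2.1.1 + 1
        rw [Nat.add_le_add_iff_right]
        have hj12 : j1 ≤ j2 := by
          by_contra hcc
          push_neg at hcc
          have h1 := hbelow1 j2 hcc
          have h2 := hle1 j2
          omega
        have hy12 : R.getD j1 0 ≤ R1.getD j2 0 := by
          rcases eq_or_lt_of_le hj12 with he | hlt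
          · rcases hcase1 with ⟨hR1, _⟩ | ⟨hR1, _, _⟩
            · exfalso
              rw [← he, hR1, getD_set_self hjlen1] at hxj2
              omega
            · rw [hR1, ← he]
          · have hj2R : j2 < R.length := hlen1 ▸ hjlen2
            have hch : R1.getD j2 0 = R.getD j2 0 := by
              rcases hcase1 with ⟨hR1, _⟩ | ⟨hR1, _, _⟩
              · rw [hR1, getD_set_ne (by omega)]
              · rw [hR1]
            rw [hch]
            exact le_of_lt (hincr j1 j2 hlt hj2R)
        exact ih (some R1) (some R2) (R.getD j1 0) (R1.getD j2 0) hvrest1 hok1 hok2 hy1pos hy12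


/-- Relation between the two `above` contexts during the joint induction, `b < a` case:
the second inserted value was bumped out of position `q` of the first's above row `A1`,
and the second's above row `A2` is `A1` possibly with that entry replaced by something
smaller. -/
def GTc (o1 o2 : Option (List ℕ)) (b : ℕ) : Prop :=
  (o1 = none ∧ o2 = none) ∨
  ∃ A1 A2 q w, o1 = some A1 ∧ o2 = some A2 ∧ Incr A1 ∧ q < A1.length ∧
    A1.getD q 0 = b ∧ A2.length = A1.length ∧ (A2 = A1 ∨ A2 = A1.set q w) ∧ w < b

/-- If `b < a` then inserting `a` and then `b`, the second special corner is strictly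
below the first. -/
lemma compare_gt : ∀ (rows : List (List ℕ)) (o1 o2 : Option (List ℕ)) (a b : ℕ),
    Valid o1 rows → okAb o1 a → okAb o2 b → 0 < b → b < a → GTc o1 o2 b →
    (hIns o1 rows a).2.1.1 < (hIns o2 (hIns o1 rows a).1 b).2.1.1 := by
  intro rows
  induction rows with
  | nil =>
    intro o1 o2 a b hv ho1 ho2 hb hba hctx
    rw [hIns_nil ho1]
    show 0 < (hIns o2 [[a]] b).2.1.1
    have hna2 : ¬ (([a].all fun r => decide (r ≤ b)) = true) := by
      simp only [List.all_cons, List.all_nil, Bool.and_true, decide_eq_true_eq]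
      omega
    have hincrA : Incr [a] := by intro i j hij hj; simp at hj; omega
    have hposA : PosL [a] := by
      intro i hi
      simp only [List.length_singleton] at hi
      interval_cases i
      simp only [List.getD_cons_zero]
      omega
    obtain ⟨j2, R2, hjlen2, hxj2, hbelow2, hlen2, hle2, hincr2, hpos2, hne2,
      hok2, hvrest2, hcase2, heq2⟩ :=
      bump_spec (o := o2) (rest := []) (by simp) hincrA hposA trivial ho2 hb hna2
    rw [heq2]
    show 0 < _ + 1
    omega
  | cons R rest ih =>
    intro o1 o2 a b hv ho1 ho2 hb hba hctx
    obtain ⟨hne, hincr, hpos, habdom, hvrest⟩ := hv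
    have hv' : Valid o1 (R :: rest) := ⟨hne, hincr, hpos, habdom, hvrest⟩
    have hRlen : 0 < R.length := List.length_pos_iff.2 hne
    have ha : 0 < a := lt_trans hb hba
    by_cases hall1 : (R.all fun r => decide (r ≤ a)) = true
    · by_cases hcond1 : (decide (R.getLastD 0 < a) && aboveOK o1 fun p =>
          decide (R.length < p.length) && decide (p.getD R.length 0 < a)) = true
      · -- (H1) for the first insertion
        have e1 : hIns o1 (R :: rest) a = ((R ++ [a]) :: rest, (0, R.length), true) := by
          rw [hIns, if_pos hall1, if_pos hcond1]
        have hvnew := valid_hIns (R :: rest) o1 a hv' ho1 ha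
        rw [e1] at hvnew
        obtain ⟨hneN, hincrN, hposN, _, hvrestN⟩ := hvnew
        rw [e1]
        show 0 < (hIns o2 ((R ++ [a]) :: rest) b).2.1.1
        have hna2 : ¬ (((R ++ [a]).all fun r => decide (r ≤ b)) = true) := by
          rw [all_le_iff]
          push_neg
          exact ⟨R.length, by simp, by rw [getD_append_last]; omega⟩
        obtain ⟨j2, R2, hjlen2, hxj2, hbelow2, hlen2, hle2, hincr2, hpos2, hne2,
          hok2, hvrest2, hcase2, heq2⟩ := bump_spec hneN hincrN hposN hvrestN ho2 hb hna2
        rw [heq2]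
        show 0 < _ + 1
        omega
      · -- (H2) for the first insertion
        have e1 : hIns o1 (R :: rest) a = (R :: rest,
            ((((R :: rest).filter fun S => decide (R.length - 1 < S.length)).length) - 1,
              R.length - 1), false) := by
          rw [hIns, if_pos hall1, if_neg hcond1]
        rw [e1]
        show (((R :: rest).filter fun S => decide (R.length - 1 < S.length)).length) - 1 <
          (hIns o2 (R :: rest) b).2.1.1
        -- the second insertion must bump in R
        have hna2 : ¬ ((R.all fun r => decide (r ≤ b)) = true) := by
          simp only [Bool.and_eq_true, not_and_or] at hcond1
          rcases hcond1 with h1 | h1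
          · -- the last entry of R equals a > b
            have hlast : a ≤ R.getD (R.length - 1) 0 := by
              rw [← getLastD_eq hne]
              simpa using h1
            rw [all_le_iff]
            push_neg
            exact ⟨R.length - 1, by omega, by omega⟩
          · -- the above check failed; use the context
            rcases hctx with ⟨hnone, _⟩ | ⟨A1, A2, q, w, hA1, hA2, hincrA1, hq, hqb, hlenA, hA2c, hw⟩
            · rw [hnone] at h1
              exact absurd rfl h1
            · rw [hA1] at h1
              simp only [aboveOK, Bool.and_eq_true, not_and_or, decide_eq_true_eq, not_lt] at h1
              rw [hA1] at habdom
              rcases lt_or_ge q R.length with hqR | hqR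
              · rw [all_le_iff]
                push_neg
                exact ⟨q, hqR, by have := habdom.2 q hqR; omega⟩
              · exfalso
                rcases h1 with h1 | h1
                · omega
                · rcases eq_or_lt_of_le hqR with he | hlt
                  · rw [he] at h1; omega
                  · have := hincrA1 R.length q hlt hq
                    omega
        have hvo2 : Valid o2 (R :: rest) := by
          refine ⟨hne, hincr, hpos, ?_, hvrest⟩
          rcases hctx with ⟨hn1, hn2⟩ | ⟨A1, A2, q, w, hA1, hA2, hincrA1, hq, hqb, hlenA, hA2c, hw⟩
          · rw [hn2]; trivial
          · rw [hA2]
            rw [hA1] at habdom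
            refine ⟨by rw [hlenA]; exact habdom.1, fun k hk => ?_⟩
            have hle2 : A2.getD k 0 ≤ A1.getD k 0 := by
              rcases hA2c with rfl | hset
              · exact le_refl _
              · rcases eq_or_ne q k with rfl | hqk
                · rw [hset, getD_set_self hq]; omega
                · rw [hset, getD_set_ne hqk]
            exact lt_of_le_of_lt hle2 (habdom.2 k hk)
        have hlow := corner_low (R :: rest) o2 b hvo2 ho2 hb (by simp)
          (by simpa using hna2)
        replace hlow : (List.filter (fun S => decide (R.length - 1 < S.length)) (R :: rest)).length ≤
            (hIns o2 (R :: rest) b).2.1.1 := hlow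
        have ht : 0 < ((R :: rest).filter fun S => decide (R.length - 1 < S.length)).length := by
          rw [List.filter_cons_of_pos (by simp; omega)]
          simp
        omega
    · -- the first insertion bumps
      obtain ⟨j1, R1, hjlen1, hxj1, hbelow1, hlen1, hle1, hincr1, hpos1, hne1,
        hok1, hvrest1, hcase1, heq1⟩ := bump_spec hne hincr hpos hvrest ho1 ha hall1
      rw [heq1]
      show (hIns (some R1) rest (R.getD j1 0)).2.1.1 + 1 <
        (hIns o2 (R1 :: (hIns (some R1) rest (R.getD j1 0)).1) b).2.1.1
      have hy1pos : 0 < R.getD j1 0 := lt_trans ha hxj1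
      have hR1j1 : b < R1.getD j1 0 := by
        rcases hcase1 with ⟨hR1, _⟩ | ⟨hR1, _, _⟩
        · rw [hR1, getD_set_self hjlen1]; omega
        · rw [hR1]; omega
      have hna2 : ¬ ((R1.all fun r => decide (r ≤ b)) = true) := by
        rw [all_le_iff]
        push_neg
        exact ⟨j1, hlen1 ▸ hjlen1, hR1j1⟩
      have hvrest1' : Valid (some R1) (hIns (some R1) rest (R.getD j1 0)).1 :=
        valid_hIns rest (some R1) (R.getD j1 0) hvrest1 hok1 hy1pos
      obtain ⟨j2, R2, hjlen2, hxj2, hbelow2, hlen2, hle2, hincr2, hpos2, hne2,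
        hok2, hvrest2, hcase2, heq2⟩ := bump_spec hne1 hincr1 hpos1 hvrest1' ho2 hb hna2
      rw [heq2]
      show (hIns (some R1) rest (R.getD j1 0)).2.1.1 + 1 <
        (hIns (some R2) (hIns (some R1) rest (R.getD j1 0)).1 (R1.getD j2 0)).2.1.1 + 1
      rw [Nat.add_lt_add_iff_right]
      have hj21 : j2 ≤ j1 := by
        by_contra hcc
        push_neg at hcc
        have := hbelow2 j1 hcc
        omega
      have hy21 : R1.getD j2 0 < R.getD j1 0 := by
        rcases eq_or_lt_of_le hj21 with he | hlt
        · -- equal columns: the first insertion must have replaced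
          rcases hcase1 with ⟨hR1, _⟩ | ⟨hR1, hj1pos, hreason⟩
          · rw [he, hR1, getD_set_self hjlen1]
            exact hxj1
          · exfalso
            rcases hreason with hra | ⟨A1r, ho1r, hjA, haA⟩
            · have := hbelow2 (j1 - 1) (by omega)
              rw [hR1] at this
              omega
            · rcases hctx with ⟨hnone, _⟩ | ⟨A1, A2, q, w, hA1, hA2, hincrA1, hq, hqb, hlenA, hA2c, hw⟩
              · rw [hnone] at ho1r; cases ho1r
              · rw [hA1] at ho1r
                injection ho1r with hAe
                subst hAe
                have hqj1 : q < j1 := by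
                  by_contra hc2
                  push_neg at hc2
                  rcases eq_or_lt_of_le hc2 with he2 | hlt2
                  · rw [he2] at haA; omega
                  · have := hincrA1 j1 q hlt2 hq
                    omega
                rw [hA1] at habdom
                have hRq : b < R.getD q 0 := by
                  have := habdom.2 q (by omega)
                  omega
                have := hbelow2 q (by omega)
                rw [hR1] at this
                omega
        · -- j2 < j1
          have hch : R1.getD j2 0 = R.getD j2 0 := by
            rcases hcase1 with ⟨hR1, _⟩ | ⟨hR1, _, _⟩
            · rw [hR1, getD_set_ne (by omega)]
            · rw [hR1]
          rw [hch]
          exact hincr j2 j1 hlt hjlen1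
      have hctx' : GTc (some R1) (some R2) (R1.getD j2 0) := by
        right
        refine ⟨R1, R2, j2, b, rfl, rfl, hincr1, hjlen2, rfl, hlen2, ?_, hxj2⟩
        rcases hcase2 with ⟨hR2, _⟩ | ⟨hR2, _, _⟩
        · exact Or.inr hR2
        · exact Or.inl hR2
      exact ih (some R1) (some R2) (R.getD j1 0) (R1.getD j2 0) hvrest1 hok1 hok2
        (lt_trans hb hxj2) hy21 hctx'


/-- The corners produced by successively inserting `xs` into `T`. -/
def cornersFrom (T : List (List ℕ)) : List ℕ → List (ℕ × ℕ)
  | [] => []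
  | x :: xs => (hIns none T x).2.1 :: cornersFrom (hIns none T x).1 xs

lemma foldl_corners : ∀ (xs : List ℕ) (T : List (List ℕ)) (acc : List (ℕ × ℕ)),
    (xs.foldl (fun (acc : List (List ℕ) × List (ℕ × ℕ)) x =>
      let out := hIns none acc.1 x
      (out.1, acc.2 ++ [out.2.1])) (T, acc)).2 = acc ++ cornersFrom T xs := by
  intro xs
  induction xs with
  | nil => intro T acc; simp [cornersFrom]
  | cons x xs ih =>
    intro T acc
    rw [List.foldl_cons]
    show (xs.foldl _ ((hIns none T x).1, acc ++ [(hIns none T x).2.1])).2 = _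
    rw [ih]
    simp [cornersFrom]

lemma heckeCorners_eq (h : List ℕ) : heckeCorners h = cornersFrom [] h := by
  unfold heckeCorners
  rw [foldl_corners h [] []]
  simp

lemma main_aux : ∀ (xs : List ℕ) (T : List (List ℕ)), Valid none T → (∀ x ∈ xs, 0 < x) →
    runComp (fun a b => decide (b < a)) xs =
      runComp (fun a b => decide (a < b)) ((cornersFrom T xs).map Prod.fst) := by
  intro xs
  induction xs with
  | nil => intro T _ _; simp [cornersFrom, runComp]
  | cons x xs ih =>
    intro T hvT hposx
    cases xs with
    | nil => simp [cornersFrom, runComp]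
    | cons y ys =>
      have hx : 0 < x := hposx x (by simp)
      have hy : 0 < y := hposx y (by simp)
      have hT1 : Valid none (hIns none T x).1 := valid_hIns T none x hvT trivial hx
      have hIH := ih (hIns none T x).1 hT1 (fun z hz => hposx z (by simp [hz]))
      show runComp (fun a b => decide (b < a)) (x :: y :: ys) = _
      have hcf : cornersFrom T (x :: y :: ys) =
          (hIns none T x).2.1 :: (hIns none (hIns none T x).1 y).2.1 ::
            cornersFrom (hIns none (hIns none T x).1 y).1 ys := by
        rfl
      rw [hcf]
      simp only [List.map_cons]
      rw [runComp, runComp]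
      have hkey : (decide (y < x)) =
          (decide ((hIns none T x).2.1.1 < (hIns none (hIns none T x).1 y).2.1.1)) := by
        rcases lt_or_ge y x with hlt | hge
        · have := compare_gt T none none x y hvT trivial trivial hy hlt (Or.inl ⟨rfl, rfl⟩)
          simp [hlt, this]
        · have := compare_le T none none x y hvT trivial trivial hx hge
          simp only [decide_eq_decide]
          omega
      have hcf2 : (cornersFrom (hIns none T x).1 (y :: ys)).map Prod.fst =
          (hIns none (hIns none T x).1 y).2.1.1 ::
            (cornersFrom (hIns none (hIns none T x).1 y).1 ys).map Prod.fst := by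
        rfl
      rw [hcf2] at hIH
      rcases Bool.eq_false_or_eq_true (decide (y < x)) with hd | hd
      · rw [hd] at hkey
        rw [if_pos (by rw [hd]), if_pos (by rw [← hkey])]
        rw [hIH]
      · rw [hd] at hkey
        rw [if_neg (by rw [hd]; simp), if_neg (by rw [← hkey]; simp)]
        rw [hIH]

end HP

/-- The descent composition of a word `h` (descent at `i` when `h i > h (i+1)`)
equals the descent composition of its Hecke recording tableau `Q(h)` (descent at
`i` when the special corner of step `i+1` is in a strictly lower row than that of
step `i`): `C(h) = C(Q(h))`. -/
theorem descent_composition_of_recording_tableau (h : List ℕ) (hpos : ∀ x ∈ h, 0 < x) :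
    runComp (fun a b => decide (b < a)) h =
      runComp (fun a b => decide (a < b)) ((heckeCorners h).map Prod.fst) := by
  rw [HP.heckeCorners_eq]
  exact HP.main_aux h [] trivial hpos
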